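/- Under Assumptions A1, A2 and the cone condition A4 on A ⊂ ℝ^ℓ with Leb(A) > 0, there exist positive constants κ1, κ2, independent of λ, such that for all sufficiently small λ > 0 and every t ∈ 𝕋\{T}: sup_{u∈W} |H(α^λ_t(u))| ≤ κ1 + κ2 |ln λ| + ℓ ln(1 + sup_{u∈W} |V^λ(t+1,u)|), where α^λ is the Gibbs-form optimal regularized control and V^λ the regularized value function. -/

import Mathlib

open MeasureTheory Filter Topology
open scoped NNReal ENNReal

/-- Borel subprobability measures on `E` with the topology of weak convergence. -/
abbrev SubProb (E : Type*) [MeasurableSpace E] : Type _ :=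
  {μ : FiniteMeasure E // μ Set.univ ≤ 1}

/-- Assumption A4 (cone condition) for a set `A ⊆ ℝ^ℓ`: there are `ϑ > 0` and `ι ∈ (0,π/2]`
such that every `a ∈ A` is the vertex of a cone of angle `ι` whose intersection with the
ball `B_ϑ(a)` lies in `A` (for `ℓ = 1` the cone is a half-line, so this reduces to
`[a-ϑ,a] ⊆ A` or `[a,a+ϑ] ⊆ A`). -/
def ConeCondition {l : ℕ} (Aset : Set (EuclideanSpace ℝ (Fin l))) : Prop :=
  ∃ θ : ℝ, 0 < θ ∧ ∃ ι : ℝ, 0 < ι ∧ ι ≤ Real.pi / 2 ∧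
    ∀ a ∈ Aset, ∃ v : EuclideanSpace ℝ (Fin l), ‖v‖ = 1 ∧
      {x : EuclideanSpace ℝ (Fin l) |
        dist x a < θ ∧ ‖x - a‖ * Real.cos ι ≤ (inner ℝ (x - a) v : ℝ)} ⊆ Aset

section Regularized

variable {l : ℕ} {S W S0 : Type*}
variable [MetricSpace S] [CompactSpace S] [Nonempty S]
  [MeasurableSpace S] [BorelSpace S] [SecondCountableTopology S]
variable [Fintype W] [Nonempty W]
variable (T : ℕ) (Aset : Set (EuclideanSpace ℝ (Fin l)))
variable (Ψ : ℕ → W → S0)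
variable (f0 : ℕ → S0 → EuclideanSpace ℝ (Fin l) → SubProb S → ℝ)
variable (P0 : ℕ → W → EuclideanSpace ℝ (Fin l) → SubProb S → W → ℝ)
variable (g0 : S0 → SubProb S → ℝ)
variable (μT : W → SubProb S) (m : ℕ → W → SubProb S)

/-- `Vaux λ j u` is the regularized value function `V^λ(T-j, u)`, defined by backward
induction (`j` = number of remaining periods) via the explicit log-integral form of the
entropy-regularized dynamic programming equation:
`V^λ(t,u) = λ ln ∫_A exp((f⁰_t(Ψ_t(u),a,m_t(u)) + Σ_{u'} V^λ(t+1,u') P⁰_{t+1}(u,a,m_t(u),u'))/λ) da`,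
with terminal value `V^λ(T,u) = g⁰(Ψ_T(u),μ_T(u))`. -/
noncomputable def Vaux (lam : ℝ) : ℕ → W → ℝ
  | 0, u => g0 (Ψ T u) (μT u)
  | (j + 1), u =>
      lam * Real.log (∫ a in Aset,
        Real.exp ((f0 (T - (j + 1)) (Ψ (T - (j + 1)) u) a (m (T - (j + 1)) u)
          + ∑ u' : W, Vaux lam j u' * P0 (T - (j + 1)) u a (m (T - (j + 1)) u) u') / lam))

/-- The regularized value function `V^λ(t,u)` at calendar time `t`. -/
noncomputable def Vlam (lam : ℝ) (t : ℕ) (u : W) : ℝ :=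
  Vaux T Aset Ψ f0 P0 g0 μT m lam (T - t) u

/-- The Gibbs exponent
`G^λ_t(u,a) = f⁰_t(Ψ_t(u),a,m_t(u)) + Σ_{u'} V^λ(t+1,u') P⁰_{t+1}(u,a,m_t(u),u')`. -/
noncomputable def Gexp (lam : ℝ) (t : ℕ) (u : W) (a : EuclideanSpace ℝ (Fin l)) : ℝ :=
  f0 t (Ψ t u) a (m t u)
    + ∑ u' : W, Vlam T Aset Ψ f0 P0 g0 μT m lam (t + 1) u' * P0 t u a (m t u) u'

/-- The Gibbs-form optimal regularized control: the density on `A`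
`α^λ_t(u)(a) = exp(G^λ_t(u,a)/λ) / ∫_A exp(G^λ_t(u,a')/λ) da'`. -/
noncomputable def gibbsDensity (lam : ℝ) (t : ℕ) (u : W) (a : EuclideanSpace ℝ (Fin l)) : ℝ :=
  Real.exp (Gexp T Aset Ψ f0 P0 g0 μT m lam t u a / lam) /
    ∫ a' in Aset, Real.exp (Gexp T Aset Ψ f0 P0 g0 μT m lam t u a' / lam)

/-- The (differential) Shannon entropy of the Gibbs density:
`H(α^λ_t(u)) = -∫_A α^λ_t(u)(a) ln α^λ_t(u)(a) da`. -/
noncomputable def entGibbs (lam : ℝ) (t : ℕ) (u : W) : ℝ :=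
  -∫ a in Aset, gibbsDensity T Aset Ψ f0 P0 g0 μT m lam t u a *
      Real.log (gibbsDensity T Aset Ψ f0 P0 g0 μT m lam t u a)

end Regularized

/-!
For `φ ∝ exp (G / λ)` on `A` with normaliser `Z`, the entropy is `H = log Z - ∫ φ G / λ`.
Gibbs' inequality `-x log x ≤ x log |A| + 1 / |A| - x` gives `H ≤ log |A|`. For the lower bound,
`∫ φ G ≤ G a⋆` at a maximiser `a⋆` of `G`, and the cone at `a⋆` contains a ball of radius `ρ r`
within distance `r` of `a⋆`. As `G` is Lipschitz with constant `L ≤ K_f + |W| K_P sup |V|`, the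
integral over that ball gives `Z ≥ vol (B (ρ r)) exp ((G a⋆ - L r) / λ)`, hence
`H ≥ ℓ log (ρ r) + log vol (B 1) - L r / λ`. The radius `r = λ / (1 + sup |V|)` keeps `L r / λ`
bounded and produces the terms `ℓ |log λ|` and `ℓ log (1 + sup |V|)`.
-/

open Metric Real

theorem LipschitzOnWith.finset_sum {ι α E : Type*} [PseudoEMetricSpace α]
    [SeminormedAddCommGroup E] {s : Finset ι} {K : ι → ℝ≥0} {f : ι → α → E} {t : Set α}
    (h : ∀ i ∈ s, LipschitzOnWith (K i) (f i) t) :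
    LipschitzOnWith (∑ i ∈ s, K i) (fun x => ∑ i ∈ s, f i x) t := by
  classical
  induction s using Finset.induction_on with
  | empty => simpa using (LipschitzWith.const (α := α) (0 : E)).lipschitzOnWith
  | insert i s hi ih =>
    simp only [Finset.sum_insert hi]
    exact (h i (Finset.mem_insert_self i s)).add
      (ih fun j hj => h j (Finset.mem_insert_of_mem hj))

theorem neg_mul_log_le {x V : ℝ} (hx : 0 ≤ x) (hV : 0 < V) :
    -(x * log x) ≤ x * log V + (1 / V - x) := by
  rcases hx.eq_or_lt with rfl | hx
  · simp [hV.le]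
  -- `log y ≤ y - 1` at `y = 1 / (x V)`, multiplied by `x`
  have h := mul_le_mul_of_nonneg_left (log_le_sub_one_of_pos (by positivity : 0 < 1 / (x * V)))
    hx.le
  rw [one_div, log_inv, log_mul hx.ne' hV.ne'] at h
  have hxV : x * (x * V)⁻¹ = 1 / V := by field_simp
  linarith

section Cone

variable {E : Type*} [NormedAddCommGroup E] [InnerProductSpace ℝ E]

theorem closedBall_subset_of_cone {A : Set E} {a v : E} {θ c r : ℝ} (hv : ‖v‖ = 1)
    (hc : 0 ≤ c) (hr : 0 ≤ r) (hrθ : r < θ)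
    (hcone : {x | dist x a < θ ∧ ‖x - a‖ * c ≤ inner ℝ (x - a) v} ⊆ A) :
    closedBall (a + (r / 2) • v) ((1 - c) / (2 * (1 + c)) * r) ⊆ A ∩ closedBall a r := by
  set s := (1 - c) / (2 * (1 + c)) * r
  have hs : s * (1 + c) = r / 2 * (1 - c) := by simp only [s]; field_simp
  have hsr : s ≤ r / 2 := by nlinarith
  intro x hx
  rw [mem_closedBall] at hx
  have hxa : ‖x - a‖ ≤ s + r / 2 := by
    calc ‖x - a‖ = ‖(x - (a + (r / 2) • v)) + (r / 2) • v‖ := by congr 1; abel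
      _ ≤ s + r / 2 := by
        grw [norm_add_le, norm_smul, hv, ← dist_eq_norm, hx, Real.norm_of_nonneg (by positivity),
          mul_one]
  have hinner : r / 2 - s ≤ inner ℝ (x - a) v := by
    have hcs : |inner ℝ (x - (a + (r / 2) • v)) v| ≤ s := by
      grw [abs_real_inner_le_norm, hv, mul_one, ← dist_eq_norm, hx]
    have hsplit : inner ℝ (x - a) v = inner ℝ (x - (a + (r / 2) • v)) v + r / 2 := by
      rw [show x - a = (x - (a + (r / 2) • v)) + (r / 2) • v by abel, inner_add_left,
        real_inner_smul_left, real_inner_self_eq_norm_sq, hv]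
      ring
    linarith [neg_abs_le (inner ℝ (x - (a + (r / 2) • v)) v)]
  refine ⟨hcone ⟨?_, ?_⟩, ?_⟩
  · rw [dist_eq_norm]; linarith
  · nlinarith [mul_le_mul_of_nonneg_right hxa hc]
  · rw [mem_closedBall, dist_eq_norm]; linarith

end Cone

section Gibbs

variable {α : Type*} [MeasurableSpace α] [TopologicalSpace α] {μ : Measure α} {A : Set α}
  {g : α → ℝ}

variable (μ A g) in
noncomputable def gibbsDensityOn (a : α) : ℝ :=
  exp (g a) / ∫ x in A, exp (g x) ∂μ

variable (μ A g) in
noncomputable def gibbsEntropyOn : ℝ :=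
  -∫ a in A, gibbsDensityOn μ A g a * log (gibbsDensityOn μ A g a) ∂μ

theorem continuousOn_gibbsDensityOn (hg : ContinuousOn g A) :
    ContinuousOn (gibbsDensityOn μ A g) A :=
  (continuous_exp.comp_continuousOn hg).div_const _

variable [T2Space α] [OpensMeasurableSpace α] [IsFiniteMeasureOnCompacts μ]

theorem setIntegral_exp_pos (hA : IsCompact A) (hg : ContinuousOn g A) (hμA : μ A ≠ 0) :
    0 < ∫ x in A, exp (g x) ∂μ := by
  have : NeZero (μ.restrict A) := ⟨Measure.restrict_eq_zero.not.mpr hμA⟩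
  exact integral_exp_pos ((continuous_exp.comp_continuousOn hg).integrableOn_compact hA)

theorem gibbsDensityOn_pos (hA : IsCompact A) (hg : ContinuousOn g A) (hμA : μ A ≠ 0) (a : α) :
    0 < gibbsDensityOn μ A g a :=
  div_pos (exp_pos _) (setIntegral_exp_pos hA hg hμA)

theorem setIntegral_gibbsDensityOn (hA : IsCompact A) (hg : ContinuousOn g A) (hμA : μ A ≠ 0) :
    ∫ a in A, gibbsDensityOn μ A g a ∂μ = 1 := by
  simp only [gibbsDensityOn, integral_div]
  exact div_self (setIntegral_exp_pos hA hg hμA).ne'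

theorem log_gibbsDensityOn (hA : IsCompact A) (hg : ContinuousOn g A) (hμA : μ A ≠ 0) (a : α) :
    log (gibbsDensityOn μ A g a) = g a - log (∫ x in A, exp (g x) ∂μ) := by
  rw [gibbsDensityOn, log_div (exp_ne_zero _) (setIntegral_exp_pos hA hg hμA).ne', log_exp]

theorem gibbsEntropyOn_eq (hA : IsCompact A) (hg : ContinuousOn g A) (hμA : μ A ≠ 0) :
    gibbsEntropyOn μ A g
      = log (∫ x in A, exp (g x) ∂μ) - ∫ a in A, gibbsDensityOn μ A g a * g a ∂μ := by
  have hφ := continuousOn_gibbsDensityOn (μ := μ) hg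
  rw [gibbsEntropyOn, setIntegral_congr_fun hA.measurableSet fun a _ => by
      rw [log_gibbsDensityOn hA hg hμA, mul_sub],
    integral_sub ((hφ.mul hg).integrableOn_compact hA :
        IntegrableOn (fun a => gibbsDensityOn μ A g a * g a) A μ)
      ((hφ.integrableOn_compact hA).mul_const _),
    integral_mul_const, setIntegral_gibbsDensityOn hA hg hμA]
  ring

theorem gibbsEntropyOn_le_log_measureReal (hA : IsCompact A) (hg : ContinuousOn g A)
    (hμA : μ A ≠ 0) : gibbsEntropyOn μ A g ≤ log (μ.real A) := by
  have hV : 0 < μ.real A := ENNReal.toReal_pos hμA hA.measure_lt_top.ne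
  have hφ := continuousOn_gibbsDensityOn (μ := μ) hg
  have hφint := hφ.integrableOn_compact (μ := μ) hA
  have hconst : IntegrableOn (fun _ => 1 / μ.real A) A μ := integrableOn_const hA.measure_lt_top.ne
  have hrest : IntegrableOn (fun a => 1 / μ.real A - gibbsDensityOn μ A g a) A μ :=
    hconst.sub hφint
  have hmono := setIntegral_mono_on
    (f := fun a => -(gibbsDensityOn μ A g a * log (gibbsDensityOn μ A g a)))
    (g := fun a => gibbsDensityOn μ A g a * log (μ.real A)
      + (1 / μ.real A - gibbsDensityOn μ A g a))
    ((hφ.mul (hφ.log fun a _ => (gibbsDensityOn_pos hA hg hμA a).ne')).integrableOn_compact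
      hA).neg
    ((hφint.mul_const _).add hrest) hA.measurableSet
    fun a _ => neg_mul_log_le (gibbsDensityOn_pos hA hg hμA a).le hV
  rw [integral_neg, integral_add (hφint.mul_const _) hrest,
    integral_sub hconst hφint, integral_mul_const, setIntegral_const, smul_eq_mul,
    setIntegral_gibbsDensityOn hA hg hμA, mul_one_div_cancel hV.ne'] at hmono
  simpa [gibbsEntropyOn] using hmono

theorem log_measureReal_sub_le_gibbsEntropyOn (hA : IsCompact A) (hg : ContinuousOn g A)
    {a : α} (ha : IsMaxOn g A a) {B : Set α} (hBA : B ⊆ A) (hB : MeasurableSet B)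
    (hμB : 0 < μ.real B) {δ : ℝ} (hgB : ∀ x ∈ B, g a - δ ≤ g x) :
    log (μ.real B) - δ ≤ gibbsEntropyOn μ A g := by
  have hμA : μ A ≠ 0 := fun h => hμB.ne' (by simp [measureReal_def, measure_mono_null hBA h])
  have hexp := (continuous_exp.comp_continuousOn hg).integrableOn_compact (μ := μ) hA
  have hZ : μ.real B * exp (g a - δ) ≤ ∫ x in A, exp (g x) ∂μ := by
    calc μ.real B * exp (g a - δ) ≤ ∫ x in B, exp (g x) ∂μ := by
          rw [mul_comm]
          exact setIntegral_ge_of_const_le_real hB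
            (measure_ne_top_of_subset hBA hA.measure_lt_top.ne)
            (fun x hx => exp_le_exp.mpr (hgB x hx)) (hexp.mono_set hBA)
      _ ≤ ∫ x in A, exp (g x) ∂μ :=
          setIntegral_mono_set hexp (.of_forall fun _ => (exp_pos _).le) hBA.eventuallyLE
  have hφg : ∫ x in A, gibbsDensityOn μ A g x * g x ∂μ ≤ g a := by
    have hφ := continuousOn_gibbsDensityOn (μ := μ) hg
    calc ∫ x in A, gibbsDensityOn μ A g x * g x ∂μ ≤ ∫ x in A, gibbsDensityOn μ A g x * g a ∂μ :=
          setIntegral_mono_on ((hφ.mul hg).integrableOn_compact hA)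
            ((hφ.integrableOn_compact hA).mul_const _) hA.measurableSet
            fun x hx => mul_le_mul_of_nonneg_left (ha hx) (gibbsDensityOn_pos hA hg hμA x).le
      _ = g a := by rw [integral_mul_const, setIntegral_gibbsDensityOn hA hg hμA, one_mul]
  have hlogZ := log_le_log (by positivity) hZ
  rw [log_mul hμB.ne' (exp_ne_zero _), log_exp] at hlogZ
  rw [gibbsEntropyOn_eq hA hg hμA]
  linarith

end Gibbs

theorem log_le_gibbsEntropyOn_of_cone {E : Type*} [NormedAddCommGroup E]
    [InnerProductSpace ℝ E] [FiniteDimensional ℝ E] [MeasurableSpace E] [BorelSpace E]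
    (μ : Measure E) [μ.IsAddHaarMeasure] {A : Set E} (hA : IsCompact A) (hAne : A.Nonempty)
    {θ c : ℝ} (hc0 : 0 ≤ c) (hc1 : c < 1)
    (hcone : ∀ a ∈ A, ∃ v : E, ‖v‖ = 1 ∧
      {x | dist x a < θ ∧ ‖x - a‖ * c ≤ inner ℝ (x - a) v} ⊆ A)
    {G : E → ℝ} {L : ℝ≥0} (hG : LipschitzOnWith L G A) {lam r : ℝ} (hlam : 0 < lam)
    (hr : 0 < r) (hrθ : r < θ) :
    Module.finrank ℝ E * log ((1 - c) / (2 * (1 + c)) * r) + log (μ.real (ball 0 1))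
      - L * r / lam ≤ gibbsEntropyOn μ A (fun a => G a / lam) := by
  obtain ⟨a, ha, hmax⟩ := hA.exists_isMaxOn hAne hG.continuousOn
  obtain ⟨v, hv, hsub⟩ := hcone a ha
  set s := (1 - c) / (2 * (1 + c)) * r
  have hs : 0 < s := by positivity [sub_pos.mpr hc1]
  have hball : 0 < μ.real (ball (0 : E) 1) :=
    ENNReal.toReal_pos (measure_ball_pos μ 0 one_pos).ne' measure_ball_lt_top.ne
  have hμB := Measure.addHaar_real_closedBall μ (a + (r / 2) • v) hs.le
  have hB := closedBall_subset_of_cone hv hc0 hr.le hrθ hsub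
  have key := log_measureReal_sub_le_gibbsEntropyOn (μ := μ) (g := fun a => G a / lam)
    (δ := L * r / lam) hA (hG.continuousOn.div_const lam)
    (fun x hx => div_le_div_of_nonneg_right (hmax hx) hlam.le)
    (hB.trans Set.inter_subset_left) measurableSet_closedBall (by rw [hμB]; positivity)
    fun x hx => by
      have hxa : dist x a ≤ r := (hB hx).2
      have hGx := (abs_sub_le_iff.mp (hG.dist_le_mul x (hB hx).1 a ha)).2
      rw [← sub_div]
      gcongr
      nlinarith [L.coe_nonneg]
  rwa [hμB, log_mul (by positivity) hball.ne', log_pow] at key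

section Regularized

variable {l : ℕ} {S W S0 : Type*} [MeasurableSpace S] [Fintype W] (T : ℕ)
  {Aset : Set (EuclideanSpace ℝ (Fin l))} (Ψ : ℕ → W → S0)
  {f0 : ℕ → S0 → EuclideanSpace ℝ (Fin l) → SubProb S → ℝ}
  {P0 : ℕ → W → EuclideanSpace ℝ (Fin l) → SubProb S → W → ℝ}
  (g0 : S0 → SubProb S → ℝ) (μT : W → SubProb S) (m : ℕ → W → SubProb S)

theorem lipschitzOnWith_Gexp {Kf KP : ℝ≥0}
    (hKf : ∀ t x mm, LipschitzOnWith Kf (fun a => f0 t x a mm) Aset)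
    (hKP : ∀ t u u' mm, LipschitzOnWith KP (fun a => P0 t u a mm u') Aset)
    (lam : ℝ) (t : ℕ) (u : W) :
    LipschitzOnWith (Kf + ∑ u', ‖Vlam T Aset Ψ f0 P0 g0 μT m lam (t + 1) u'‖₊ * KP)
      (Gexp T Aset Ψ f0 P0 g0 μT m lam t u) Aset :=
  (hKf t (Ψ t u) (m t u)).add <| LipschitzOnWith.finset_sum fun u' _ =>
    (lipschitzWith_smul _).comp_lipschitzOnWith (hKP t u u' (m t u))

theorem entGibbs_eq_gibbsEntropyOn (lam : ℝ) (t : ℕ) (u : W) :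
    entGibbs T Aset Ψ f0 P0 g0 μT m lam t u
      = gibbsEntropyOn volume Aset (fun a => Gexp T Aset Ψ f0 P0 g0 μT m lam t u a / lam) :=
  rfl

theorem log_sub_le_entGibbs {θ c : ℝ} (hA : IsCompact Aset) (hAne : Aset.Nonempty)
    (hc0 : 0 ≤ c) (hc1 : c < 1)
    (hcone : ∀ a ∈ Aset, ∃ v, ‖v‖ = 1 ∧
      {x | dist x a < θ ∧ ‖x - a‖ * c ≤ inner ℝ (x - a) v} ⊆ Aset)
    {Kf KP : ℝ≥0} (hKf : ∀ t x mm, LipschitzOnWith Kf (fun a => f0 t x a mm) Aset)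
    (hKP : ∀ t u u' mm, LipschitzOnWith KP (fun a => P0 t u a mm u') Aset)
    {lam : ℝ} (hlam : 0 < lam) (hlamθ : lam < θ) (t : ℕ) (u : W) :
    l * (log ((1 - c) / (2 * (1 + c))) + log lam
        - log (1 + ⨆ u', |Vlam T Aset Ψ f0 P0 g0 μT m lam (t + 1) u'|))
      + log (volume.real (ball (0 : EuclideanSpace ℝ (Fin l)) 1)) - (Kf + Fintype.card W * KP)
      ≤ entGibbs T Aset Ψ f0 P0 g0 μT m lam t u := by
  set V := Vlam T Aset Ψ f0 P0 g0 μT m lam (t + 1)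
  set M := ⨆ u', |V u'|
  have hM0 : 0 ≤ M := Real.iSup_nonneg fun _ => abs_nonneg _
  have hL : ((Kf + ∑ u', ‖V u'‖₊ * KP : ℝ≥0) : ℝ) ≤ Kf + Fintype.card W * KP * M := by
    have hV : ∀ u', |V u'| ≤ M := fun u' =>
      le_ciSup (f := fun u' => |V u'|) (Set.finite_range _).bddAbove u'
    push_cast
    simp only [Real.norm_eq_abs]
    grw [Finset.sum_le_sum fun u' _ => mul_le_mul_of_nonneg_right (hV u') KP.coe_nonneg]
    simp only [Finset.sum_const, Finset.card_univ, nsmul_eq_mul]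
    linarith
  have hLr : (Kf + ∑ u', ‖V u'‖₊ * KP : ℝ≥0) * (lam / (1 + M)) / lam
      ≤ Kf + Fintype.card W * KP := by
    rw [div_le_iff₀ hlam, ← mul_div_assoc, div_le_iff₀ (by positivity)]
    have hW : (0 : ℝ) ≤ Fintype.card W * KP := by positivity
    nlinarith [mul_le_mul_of_nonneg_right hL hlam.le, mul_nonneg hW hlam.le,
      mul_nonneg (mul_nonneg hlam.le hM0) Kf.coe_nonneg]
  have hlower := log_le_gibbsEntropyOn_of_cone volume hA hAne hc0 hc1 hcone
    (lipschitzOnWith_Gexp T Ψ g0 μT m hKf hKP lam t u) hlam (r := lam / (1 + M)) (by positivity)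
    ((div_le_self hlam.le (by linarith)).trans_lt hlamθ)
  rw [finrank_euclideanSpace_fin, log_mul (by positivity [sub_pos.mpr hc1]) (by positivity),
    log_div hlam.ne' (by positivity)] at hlower
  rw [entGibbs_eq_gibbsEntropyOn]
  linarith

end Regularized

theorem entropy_of_gibbs_control_bound_general
    {l : ℕ} {S W S0 : Type*}
    [MeasurableSpace S]
    [Fintype W]
    (T : ℕ)
    (Aset : Set (EuclideanSpace ℝ (Fin l)))
    (hAcompact : IsCompact Aset) (hAne : Aset.Nonempty)
    (hALeb : 0 < MeasureTheory.volume Aset)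
    (hAcone : ConeCondition Aset)
    (Ψ : ℕ → W → S0)
    (f0 : ℕ → S0 → EuclideanSpace ℝ (Fin l) → SubProb S → ℝ)
    (P0 : ℕ → W → EuclideanSpace ℝ (Fin l) → SubProb S → W → ℝ)
    (g0 : S0 → SubProb S → ℝ)
    -- Assumption A1 for the major kernel (as a transition mass function on the finite
    -- set W): values in [0,1], total mass one, continuity in (a,m) on A × 𝒫^sub(S),
    -- and uniform Lipschitz continuity in the action
    (hP0Lip : ∃ K : NNReal, ∀ t u u' mm,
      LipschitzOnWith K (fun a => P0 t u a mm u') Aset)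
    -- Assumption A2: continuity of f⁰ in (a,m), uniform Lipschitz continuity in the
    -- action, and continuity of g⁰ in m
    (hf0Lip : ∃ K : NNReal, ∀ t x mm, LipschitzOnWith K (fun a => f0 t x a mm) Aset)
    (μT : W → SubProb S) (m : ℕ → W → SubProb S) :
    ∃ κ1 κ2 : ℝ, 0 < κ1 ∧ 0 < κ2 ∧ ∃ lam0 : ℝ, 0 < lam0 ∧
      ∀ lam : ℝ, 0 < lam → lam ≤ lam0 → ∀ t < T, ∀ u : W,
        |entGibbs T Aset Ψ f0 P0 g0 μT m lam t u| ≤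
          κ1 + κ2 * |Real.log lam| +
            (l : ℝ) * Real.log (1 + ⨆ u' : W, |Vlam T Aset Ψ f0 P0 g0 μT m lam (t + 1) u'|) := by
  obtain ⟨θ, hθ, ι, hι, hιπ, hcone⟩ := hAcone
  obtain ⟨KP, hKP⟩ := hP0Lip
  obtain ⟨Kf, hKf⟩ := hf0Lip
  have hc0 : 0 ≤ cos ι := cos_nonneg_of_mem_Icc ⟨by linarith [pi_pos], hιπ⟩
  have hc1 : cos ι < 1 := by
    simpa using cos_lt_cos_of_nonneg_of_le_pi le_rfl (by linarith [pi_pos]) hι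
  set ρ := (1 - cos ι) / (2 * (1 + cos ι))
  set b := volume.real (ball (0 : EuclideanSpace ℝ (Fin l)) 1)
  set VA := volume.real Aset
  refine ⟨Kf + Fintype.card W * KP + |log b| + l * |log ρ| + |log VA| + 1, l + 1,
    by positivity, by positivity, θ / 2, by positivity, fun lam hlam hlamθ t _ u => ?_⟩
  have hlower := log_sub_le_entGibbs T Ψ g0 μT m hAcompact hAne hc0 hc1 hcone hKf hKP hlam
    (by linarith) t u
  have hupper : entGibbs T Aset Ψ f0 P0 g0 μT m lam t u ≤ log VA :=
    gibbsEntropyOn_le_log_measureReal hAcompact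
      ((lipschitzOnWith_Gexp T Ψ g0 μT m hKf hKP lam t u).continuousOn.div_const lam) hALeb.ne'
  have hl : (0 : ℝ) ≤ l := Nat.cast_nonneg l
  have hlogM : 0 ≤ log (1 + ⨆ u', |Vlam T Aset Ψ f0 P0 g0 μT m lam (t + 1) u'|) :=
    log_nonneg (le_add_of_nonneg_right (Real.iSup_nonneg fun _ => abs_nonneg _))
  rw [abs_le]
  constructor
  · nlinarith [neg_abs_le (log ρ), neg_abs_le (log lam), neg_abs_le (log b), abs_nonneg (log lam),
      abs_nonneg (log VA)]
  · nlinarith [le_abs_self (log VA), abs_nonneg (log lam), abs_nonneg (log ρ), abs_nonneg (log b)]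

/-- Under Assumptions A1, A2 and the cone condition A4 on the compact action
set `A ⊂ ℝ^ℓ` with `Leb(A) > 0`, there exist positive constants `κ₁, κ₂` independent of
`λ` such that for all sufficiently small `λ > 0` and every `t ∈ 𝕋\{T}`:
`sup_{u∈W} |H(α^λ_t(u))| ≤ κ₁ + κ₂ |ln λ| + ℓ ln(1 + sup_{u∈W} |V^λ(t+1,u)|)`. -/
theorem entropy_of_gibbs_control_bound
    {l : ℕ} {S W S0 : Type*}
    [MetricSpace S] [CompactSpace S] [Nonempty S]
    [MeasurableSpace S] [BorelSpace S] [SecondCountableTopology S]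
    [Fintype W] [Nonempty W] [Fintype S0]
    (T : ℕ)
    (Aset : Set (EuclideanSpace ℝ (Fin l)))
    (hAcompact : IsCompact Aset) (hAne : Aset.Nonempty)
    (hALeb : 0 < MeasureTheory.volume Aset)
    (hAcone : ConeCondition Aset)
    (Ψ : ℕ → W → S0)
    (f0 : ℕ → S0 → EuclideanSpace ℝ (Fin l) → SubProb S → ℝ)
    (P0 : ℕ → W → EuclideanSpace ℝ (Fin l) → SubProb S → W → ℝ)
    (g0 : S0 → SubProb S → ℝ)
    -- Assumption A1 for the major kernel (as a transition mass function on the finite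
    -- set W): values in [0,1], total mass one, continuity in (a,m) on A × 𝒫^sub(S),
    -- and uniform Lipschitz continuity in the action
    (hP0range : ∀ t u a mm u', P0 t u a mm u' ∈ Set.Icc (0 : ℝ) 1)
    (hP0sum : ∀ t u a mm, (∑ u' : W, P0 t u a mm u') = 1)
    (hP0cont : ∀ t u u', ContinuousOn
      (fun z : EuclideanSpace ℝ (Fin l) × SubProb S => P0 t u z.1 z.2 u')
      (Aset ×ˢ (Set.univ : Set (SubProb S))))
    (hP0Lip : ∃ K : NNReal, ∀ t u u' mm,
      LipschitzOnWith K (fun a => P0 t u a mm u') Aset)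
    -- Assumption A2: continuity of f⁰ in (a,m), uniform Lipschitz continuity in the
    -- action, and continuity of g⁰ in m
    (hf0cont : ∀ t x, ContinuousOn
      (fun z : EuclideanSpace ℝ (Fin l) × SubProb S => f0 t x z.1 z.2)
      (Aset ×ˢ (Set.univ : Set (SubProb S))))
    (hf0Lip : ∃ K : NNReal, ∀ t x mm, LipschitzOnWith K (fun a => f0 t x a mm) Aset)
    (hg0cont : ∀ x, Continuous fun mm : SubProb S => g0 x mm)
    (μT : W → SubProb S) (m : ℕ → W → SubProb S) :
    ∃ κ1 κ2 : ℝ, 0 < κ1 ∧ 0 < κ2 ∧ ∃ lam0 : ℝ, 0 < lam0 ∧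
      ∀ lam : ℝ, 0 < lam → lam ≤ lam0 → ∀ t < T, ∀ u : W,
        |entGibbs T Aset Ψ f0 P0 g0 μT m lam t u| ≤
          κ1 + κ2 * |Real.log lam| +
            (l : ℝ) * Real.log (1 + ⨆ u' : W, |Vlam T Aset Ψ f0 P0 g0 μT m lam (t + 1) u'|) :=
  entropy_of_gibbs_control_bound_general T Aset hAcompact hAne hALeb hAcone Ψ f0 P0 g0 hP0Lip hf0Lip
    μT m
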